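/- Let X be a d-space such that ↓(A ∩ K) is closed for every closed set A and every nonempty compact saturated set K. Then X is well-filtered. -/

import Mathlib

open Set

universe u

variable {α : Type u}

/-- The specialization order used in the paper: `x ≤ y` iff `x ∈ closure {y}`. -/
def specLE [TopologicalSpace α] (x y : α) : Prop := x ∈ closure ({y} : Set α)

/-- `↑x = {y | x ≤ y}` in the specialization order. -/
def upOf [TopologicalSpace α] (x : α) : Set α := {y | specLE x y}

/-- `↑F = {y | ∃ a ∈ F, a ≤ y}` in the specialization order. -/
def upSetOf [TopologicalSpace α] (F : Set α) : Set α := {y | ∃ a ∈ F, specLE a y}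

/-- `↓B = {x | ∃ b ∈ B, x ≤ b}` in the specialization order. -/
def downOf [TopologicalSpace α] (B : Set α) : Set α := {x | ∃ b ∈ B, specLE x b}

/-- A set directed with respect to the specialization order: nonempty, and any two
elements have an upper bound in it. -/
def SDirected [TopologicalSpace α] (D : Set α) : Prop :=
  D.Nonempty ∧ ∀ a ∈ D, ∀ b ∈ D, ∃ c ∈ D, specLE a c ∧ specLE b c

/-- `s` is a supremum (least upper bound) of `D` in the specialization order. -/
def SIsSup [TopologicalSpace α] (D : Set α) (s : α) : Prop :=
  (∀ d ∈ D, specLE d s) ∧ ∀ t : α, (∀ d ∈ D, specLE d t) → specLE s t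

/-- Upper set (= saturated set) in the specialization order. -/
def SUpper [TopologicalSpace α] (A : Set α) : Prop :=
  ∀ ⦃x y : α⦄, x ∈ A → specLE x y → y ∈ A

/-- Scott open set with respect to the specialization order. -/
def SScottOpen [TopologicalSpace α] (U : Set α) : Prop :=
  SUpper U ∧ ∀ D : Set α, SDirected D → ∀ s : α, SIsSup D s → s ∈ U → (D ∩ U).Nonempty

/-- A d-space: a dcpo under the specialization order, all open sets Scott open. -/
def IsDSpace (α : Type u) [TopologicalSpace α] : Prop :=
  (∀ D : Set α, SDirected D → ∃ s : α, SIsSup D s) ∧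
    ∀ U : Set α, IsOpen U → SScottOpen U

/-- Member of `K(X)`: nonempty, compact and saturated. -/
def IsKSet [TopologicalSpace α] (K : Set α) : Prop :=
  K.Nonempty ∧ IsCompact K ∧ SUpper K

/-- A filtered family of sets: nonempty, and any two members contain a common member. -/
def FilteredFam (𝒦 : Set (Set α)) : Prop :=
  𝒦.Nonempty ∧ ∀ K1 ∈ 𝒦, ∀ K2 ∈ 𝒦, ∃ K3 ∈ 𝒦, K3 ⊆ K1 ∩ K2

/-- Well-filtered space: for every filtered family of nonempty compact saturated sets whose
intersection is contained in an open `U`, some member is contained in `U`. -/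
def IsWellFiltered (α : Type u) [TopologicalSpace α] : Prop :=
  ∀ 𝒦 : Set (Set α), (∀ K ∈ 𝒦, IsKSet K) → FilteredFam 𝒦 →
    ∀ U : Set α, IsOpen U → ⋂₀ 𝒦 ⊆ U → ∃ K ∈ 𝒦, K ⊆ U

/-- Rudin set: a nonempty set `A` such that for some filtered family `𝒦 ⊆ K(X)`,
`closure A` is a minimal closed set meeting every member of `𝒦`. -/
def IsRudin [TopologicalSpace α] (A : Set α) : Prop :=
  A.Nonempty ∧ ∃ 𝒦 : Set (Set α), (∀ K ∈ 𝒦, IsKSet K) ∧ FilteredFam 𝒦 ∧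
    (∀ K ∈ 𝒦, (closure A ∩ K).Nonempty) ∧
    ∀ B : Set α, IsClosed B → B ⊆ closure A → (∀ K ∈ 𝒦, (B ∩ K).Nonempty) → B = closure A

/-- Well-filtered determined set: every continuous map into a well-filtered T0 space sends it
to a set whose closure is the closure of a unique point. -/
def IsWFD [TopologicalSpace α] (A : Set α) : Prop :=
  ∀ (Y : Type u) [TopologicalSpace Y] [T0Space Y], IsWellFiltered Y →
    ∀ f : α → Y, Continuous f → ∃! y : Y, closure (f '' A) = closure ({y} : Set Y)

/-- Irreducible set. -/
def IsIrred [TopologicalSpace α] (A : Set α) : Prop :=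
  A.Nonempty ∧ ∀ F1 F2 : Set α, IsClosed F1 → IsClosed F2 → A ⊆ F1 ∪ F2 → A ⊆ F1 ∨ A ⊆ F2

/-- Sober space: every irreducible closed set is the closure of a unique point. -/
def IsSober (α : Type u) [TopologicalSpace α] : Prop :=
  ∀ A : Set α, IsClosed A → IsIrred A → ∃! x : α, A = closure ({x} : Set α)

/-- `A` has a maximal element with respect to the specialization order. -/
def HasMaxElem [TopologicalSpace α] (A : Set α) : Prop :=
  ∃ m ∈ A, ∀ a ∈ A, specLE m a → a = m

/-- Strong d-space. -/
def IsStrongDSpace (α : Type u) [TopologicalSpace α] : Prop :=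
  ∀ D : Set α, SDirected D → ∀ x : α, ∀ U : Set α, IsOpen U →
    (⋂ d ∈ D, upOf d) ∩ upOf x ⊆ U → ∃ d ∈ D, upOf d ∩ upOf x ⊆ U

/-!
Suppose a filtered family `𝒦 ⊆ K(X)` had no member inside the open set `U ⊇ ⋂ 𝒦`. By Zorn's
lemma and compactness there is a minimal closed set `C ⊆ X \ U` meeting every member of `𝒦`.
For `K ∈ 𝒦` the set `↓(C ∩ K)` is closed, lies in `C` and, as `𝒦` is filtered, still meets every
member of `𝒦`, so it equals `C`. Since `X` is a d-space, `C` has a maximal element `m`; from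
`m ∈ ↓(C ∩ K)` maximality gives `m ∈ K` for every `K ∈ 𝒦`, so `m ∈ ⋂ 𝒦 ⊆ U`, a contradiction.
-/

section

variable [TopologicalSpace α]

lemma specLE_iff_specializes {x y : α} : specLE x y ↔ y ⤳ x :=
  specializes_iff_mem_closure.symm

lemma specLE_refl (x : α) : specLE x x := subset_closure rfl

lemma specLE_trans {x y z : α} (hxy : specLE x y) (hyz : specLE y z) : specLE x z :=
  specLE_iff_specializes.2 <| (specLE_iff_specializes.1 hyz).trans (specLE_iff_specializes.1 hxy)

lemma specLE_antisymm [T0Space α] {x y : α} (hxy : specLE x y) (hyx : specLE y x) : x = y :=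
  ((specLE_iff_specializes.1 hyx).antisymm (specLE_iff_specializes.1 hxy)).eq

lemma IsClosed.mem_of_specLE {C : Set α} (hC : IsClosed C) {x b : α} (hb : b ∈ C)
    (hxb : specLE x b) : x ∈ C :=
  (specLE_iff_specializes.1 hxb).mem_closed hC hb

lemma subset_downOf (B : Set α) : B ⊆ downOf B :=
  fun x hx => ⟨x, hx, specLE_refl x⟩

lemma IsClosed.downOf_subset {B C : Set α} (hC : IsClosed C) (hBC : B ⊆ C) : downOf B ⊆ C := by
  rintro x ⟨b, hb, hxb⟩
  exact hC.mem_of_specLE (hBC hb) hxb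

lemma sDirected_of_isChain {D : Set α} (hne : D.Nonempty) (hD : IsChain specLE D) :
    SDirected D := by
  refine ⟨hne, fun a ha b hb => ?_⟩
  rcases eq_or_ne a b with rfl | hab
  · exact ⟨a, ha, specLE_refl a, specLE_refl a⟩
  · rcases hD ha hb hab with hle | hle
    · exact ⟨b, hb, hle, specLE_refl b⟩
    · exact ⟨a, ha, specLE_refl a, hle⟩

lemma IsDSpace.sup_mem_of_isClosed (hd : IsDSpace α) {C D : Set α} (hC : IsClosed C)
    (hD : SDirected D) (hDC : D ⊆ C) {s : α} (hs : SIsSup D s) : s ∈ C := by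
  by_contra hsC
  obtain ⟨x, hxD, hxC⟩ := (hd.2 Cᶜ hC.isOpen_compl).2 D hD s hs hsC
  exact hxC (hDC hxD)

lemma IsDSpace.hasMaxElem_of_isClosed [T0Space α] (hd : IsDSpace α) {C : Set α}
    (hC : IsClosed C) (hne : C.Nonempty) : HasMaxElem C := by
  have : Nonempty C := hne.to_subtype
  have hchains : ∀ c : Set C, IsChain (fun a b : C => specLE (a : α) b) c → c.Nonempty →
      ∃ ub : C, ∀ a ∈ c, specLE (a : α) ub := by
    intro c hc hcne
    have hD : SDirected (Subtype.val '' c) :=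
      sDirected_of_isChain (hcne.image _) (hc.image_of_map_rel _ specLE Subtype.val fun _ _ h => h)
    obtain ⟨s, hs⟩ := hd.1 _ hD
    exact ⟨⟨s, hd.sup_mem_of_isClosed hC hD (by simp) hs⟩, fun a ha => hs.1 a ⟨a, ha, rfl⟩⟩
  obtain ⟨m, hm⟩ := exists_maximal_of_nonempty_chains_bounded hchains specLE_trans
  exact ⟨m, m.2, fun a ha hma => specLE_antisymm (hm ⟨a, ha⟩ hma) hma⟩

lemma IsCompact.inter_sInter_nonempty_of_isChain {K : Set α} (hK : IsCompact K)
    {c : Set (Set α)} (hne : c.Nonempty) (hc : IsChain (· ⊆ ·) c) (hcl : ∀ C ∈ c, IsClosed C)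
    (hmeet : ∀ C ∈ c, (C ∩ K).Nonempty) : (⋂₀ c ∩ K).Nonempty := by
  have : Nonempty c := hne.to_subtype
  rw [nonempty_iff_ne_empty, inter_comm, sInter_eq_iInter]
  intro hempty
  obtain ⟨C, hC⟩ := hK.elim_directed_family_closed (fun C : c => (C : Set α))
    (fun C => hcl C C.2) hempty
    (hc.symm.directedOn (r := fun s t : Set α => s ⊇ t)).directed_val
  exact (hmeet C C.2).ne_empty (by rwa [inter_comm])

lemma exists_minimal_isClosed_inter_nonempty {𝒦 : Set (Set α)} (h𝒦 : ∀ K ∈ 𝒦, IsCompact K)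
    {F : Set α} (hF : IsClosed F) (hmeet : ∀ K ∈ 𝒦, (F ∩ K).Nonempty) :
    ∃ C ⊆ F, Minimal (fun C => IsClosed C ∧ ∀ K ∈ 𝒦, (C ∩ K).Nonempty) C := by
  refine zorn_superset_nonempty _ (fun c hcS hc hne => ?_) F ⟨hF, hmeet⟩
  exact ⟨⋂₀ c, ⟨isClosed_sInter fun C hC => (hcS hC).1, fun K hK =>
    (h𝒦 K hK).inter_sInter_nonempty_of_isChain hne hc (fun C hC => (hcS hC).1)
      fun C hC => (hcS hC).2 K hK⟩, fun _ => sInter_subset_of_mem⟩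

lemma subset_downOf_inter_of_minimal {𝒦 : Set (Set α)} (h𝒦 : FilteredFam 𝒦) {C : Set α}
    (hC : Minimal (fun C => IsClosed C ∧ ∀ K ∈ 𝒦, (C ∩ K).Nonempty) C) {K : Set α}
    (hK : K ∈ 𝒦) (hdown : IsClosed (downOf (C ∩ K))) : C ⊆ downOf (C ∩ K) := by
  refine hC.le_of_le ⟨hdown, fun K' hK' => ?_⟩ (hC.prop.1.downOf_subset inter_subset_left)
  obtain ⟨L, hL, hLK⟩ := h𝒦.2 K hK K' hK'
  obtain ⟨x, hxC, hxL⟩ := hC.prop.2 L hL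
  exact ⟨x, subset_downOf _ ⟨hxC, (hLK hxL).1⟩, (hLK hxL).2⟩

end

/-- a d-space in which `↓(A ∩ K)` is closed for all closed `A` and all
nonempty compact saturated `K` is well-filtered. -/
theorem stmt_14 (α : Type u) [TopologicalSpace α] [T0Space α] (hd : IsDSpace α)
    (h : ∀ A K : Set α, IsClosed A → IsKSet K → IsClosed (downOf (A ∩ K))) :
    IsWellFiltered α := by
  intro 𝒦 hK h𝒦 U hU hsub
  by_contra! hnot
  obtain ⟨C, hCU, hC⟩ := exists_minimal_isClosed_inter_nonempty (fun K hK' => (hK K hK').2.1)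
    hU.isClosed_compl fun K hK' => by
      obtain ⟨x, hxK, hxU⟩ := not_subset.1 (hnot K hK')
      exact ⟨x, hxU, hxK⟩
  obtain ⟨K₀, hK₀⟩ := h𝒦.1
  obtain ⟨m, hmC, hmax⟩ :=
    hd.hasMaxElem_of_isClosed hC.prop.1 ((hC.prop.2 K₀ hK₀).mono inter_subset_left)
  have hm : m ∈ ⋂₀ 𝒦 := fun K hK' => by
    obtain ⟨b, ⟨hbC, hbK⟩, hmb⟩ :=
      subset_downOf_inter_of_minimal h𝒦 hC hK' (h C K hC.prop.1 (hK K hK')) hmC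
    rwa [hmax b hbC hmb] at hbK
  exact hCU hmC (hsub hm)
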